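/- arXiv:1010.2320 — 6 statements merged into one kernel-verified Lean document; each statement's English description precedes it below -/
import Mathlib

section
/- Let A ⊂ ℝⁿ be a compact uniformly convex set with modulus of convexity δ_A. Let ε ∈ (0, diam A) and Δ ∈ (0,1/2). Let p₁, p₂ ∈ ℝⁿ with ‖p₁‖ = 1 and 1 − Δ²/2 ≤ ‖p₂‖ ≤ 1, and let x₁, x₂ ∈ A be points with ⟨p₁, x₁⟩ = s(p₁, A) and ⟨p₂, x₂⟩ = s(p₂, A). If ‖p₁ − p₂‖ < (4 − Δ²)·δ_A(ε)/ε, then ‖x₁ − x₂‖ < ε. -/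
/-!
If `‖x₁ - x₂‖ ≥ ε`, let `y` be the point of `[x₁, x₂]` at distance `ε` from `x₁`. For any `δ`
admissible in the definition of `δ_A(ε)`, the ball of radius `δ` about the midpoint of `[x₁, y]`
lies in `A`, and its point furthest in direction `p₁` cannot beat the maximizer `x₁`; this gives
`2 δ ‖p₁‖ ‖x₁ - x₂‖ ≤ ε ⟪p₁, x₁ - x₂⟫`, and symmetrically for `p₂`. Adding the two and applying
Cauchy–Schwarz yields `2 δ (‖p₁‖ + ‖p₂‖) ≤ ε ‖p₁ - p₂‖`, and `‖p₁‖ + ‖p₂‖ ≥ 2 - Δ² / 2` turns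
this into `(4 - Δ²) δ_A(ε) ≤ ε ‖p₁ - p₂‖`.
-/

open Set Metric Pointwise

/-- Supporting function `s(p, A) = sup_{x ∈ A} ⟪p, x⟫`. -/
noncomputable def suppF {n : ℕ} (p : EuclideanSpace ℝ (Fin n))
    (A : Set (EuclideanSpace ℝ (Fin n))) : ℝ :=
  sSup ((fun x => (inner ℝ p x : ℝ)) '' A)

/-- Modulus of convexity of a set `A`. -/
noncomputable def modConv {n : ℕ} (A : Set (EuclideanSpace ℝ (Fin n))) (ε : ℝ) : ℝ :=
  sSup {δ : ℝ | 0 ≤ δ ∧ ∀ x₁ ∈ A, ∀ x₂ ∈ A, ‖x₁ - x₂‖ = ε →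
    Metric.closedBall (midpoint ℝ x₁ x₂) δ ⊆ A}

/-- `A` is uniformly convex: its modulus of convexity is positive on `(0, diam A)`. -/
def UnifConvex {n : ℕ} (A : Set (EuclideanSpace ℝ (Fin n))) : Prop :=
  ∀ ε : ℝ, 0 < ε → ε < Metric.diam A → 0 < modConv A ε

/-- `C` is a grid with step `Δ`: a finite set of unit vectors such that every nonzero `p`
whose normalization is not in `C` is a positive combination of grid vectors that are
pairwise `Δ`-close. -/
def IsGrid {n : ℕ} (C : Finset (EuclideanSpace ℝ (Fin n))) (Δ : ℝ) : Prop :=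
  (∀ p ∈ C, ‖p‖ = 1) ∧
  ∀ p : EuclideanSpace ℝ (Fin n), p ≠ 0 → ‖p‖⁻¹ • p ∉ C →
    ∃ (k : ℕ) (q : Fin k → EuclideanSpace ℝ (Fin n)) (α : Fin k → ℝ),
      (∀ i, q i ∈ C) ∧ (∀ i, 0 < α i) ∧ p = ∑ i, α i • q i ∧
      ∀ i j, ‖q i - q j‖ < Δ

/-- External polyhedral approximation of `A` on the grid `C`. -/
def polyApprox {n : ℕ} (C : Finset (EuclideanSpace ℝ (Fin n)))
    (A : Set (EuclideanSpace ℝ (Fin n))) : Set (EuclideanSpace ℝ (Fin n)) :=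
  {x | ∀ p ∈ C, (inner ℝ p x : ℝ) ≤ suppF p A}

/-- Geometric (Minkowski–Pontryagin) difference `B ⊖ A = {x | x + A ⊆ B}`. -/
def geomDiff {n : ℕ} (B A : Set (EuclideanSpace ℝ (Fin n))) :
    Set (EuclideanSpace ℝ (Fin n)) :=
  {x | ∀ a ∈ A, x + a ∈ B}

open scoped RealInnerProductSpace

section MidpointBalls

variable {E : Type*} [NormedAddCommGroup E] [InnerProductSpace ℝ E]

def HasMidpointBalls (A : Set E) (ε δ : ℝ) : Prop :=
  ∀ z₁ ∈ A, ∀ z₂ ∈ A, ‖z₁ - z₂‖ = ε → closedBall (midpoint ℝ z₁ z₂) δ ⊆ A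

theorem IsMaxOn.two_mul_mul_norm_le_inner_sub {A : Set E} {p x y : E} {δ : ℝ}
    (hx : IsMaxOn (fun z => ⟪p, z⟫) A x) (hδ : 0 ≤ δ)
    (hball : closedBall (midpoint ℝ x y) δ ⊆ A) :
    2 * (δ * ‖p‖) ≤ ⟪p, x - y⟫ := by
  rcases eq_or_ne p 0 with rfl | hp
  · simp
  have hp' : ‖p‖ ≠ 0 := norm_ne_zero_iff.2 hp
  set z := midpoint ℝ x y + (δ / ‖p‖) • p
  have hz : z ∈ A := hball <| by
    rw [mem_closedBall, dist_eq_norm, add_sub_cancel_left, norm_smul, Real.norm_eq_abs,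
      abs_of_nonneg (by positivity), div_mul_cancel₀ δ hp']
  have hinner : ⟪p, z⟫ = (⟪p, x⟫ + ⟪p, y⟫) / 2 + δ * ‖p‖ := by
    simp only [z, midpoint_eq_smul_add, invOf_eq_inv, inner_add_right, real_inner_smul_right,
      real_inner_self_eq_norm_sq]
    field_simp
  have hzx : ⟪p, z⟫ ≤ ⟪p, x⟫ := hx hz
  rw [inner_sub_right]
  linarith

theorem HasMidpointBalls.two_mul_mul_norm_mul_norm_sub_le {A : Set E} {ε δ : ℝ}
    (hballs : HasMidpointBalls A ε δ) (hA : Convex ℝ A) {p x x' : E}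
    (hx : IsMaxOn (fun z => ⟪p, z⟫) A x) (hxA : x ∈ A) (hx'A : x' ∈ A)
    (hε : 0 < ε) (hεx : ε ≤ ‖x - x'‖) (hδ : 0 ≤ δ) :
    2 * (δ * ‖p‖) * ‖x - x'‖ ≤ ε * ⟪p, x - x'⟫ := by
  have hd : 0 < ‖x - x'‖ := hε.trans_le hεx
  set t := ε / ‖x - x'‖
  have ht : t ∈ Icc (0 : ℝ) 1 := ⟨by positivity, div_le_one_of_le₀ hεx hd.le⟩
  set y := AffineMap.lineMap x x' t
  have hxy : x - y = t • (x - x') := by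
    simp only [y, AffineMap.lineMap_apply, vsub_eq_sub, vadd_eq_add]
    module
  have hxyε : ‖x - y‖ = ε := by
    rw [hxy, norm_smul, Real.norm_eq_abs, abs_of_nonneg ht.1, div_mul_cancel₀ ε hd.ne']
  have := hx.two_mul_mul_norm_le_inner_sub hδ (hballs x hxA y (hA.lineMap_mem hxA hx'A ht) hxyε)
  rw [hxy, real_inner_smul_right] at this
  calc 2 * (δ * ‖p‖) * ‖x - x'‖ ≤ t * ⟪p, x - x'⟫ * ‖x - x'‖ := by gcongr
    _ = ε * ⟪p, x - x'⟫ := by simp only [t]; field_simp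

theorem HasMidpointBalls.two_mul_mul_add_norm_le {A : Set E} {ε δ : ℝ}
    (hballs : HasMidpointBalls A ε δ) (hA : Convex ℝ A) {p₁ p₂ x₁ x₂ : E}
    (hx₁ : IsMaxOn (fun z => ⟪p₁, z⟫) A x₁) (hx₂ : IsMaxOn (fun z => ⟪p₂, z⟫) A x₂)
    (hx₁A : x₁ ∈ A) (hx₂A : x₂ ∈ A)
    (hε : 0 < ε) (hεx : ε ≤ ‖x₁ - x₂‖) (hδ : 0 ≤ δ) :
    2 * (δ * (‖p₁‖ + ‖p₂‖)) ≤ ε * ‖p₁ - p₂‖ := by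
  have hd : 0 < ‖x₁ - x₂‖ := hε.trans_le hεx
  have h₁ := hballs.two_mul_mul_norm_mul_norm_sub_le hA hx₁ hx₁A hx₂A hε hεx hδ
  have h₂ := hballs.two_mul_mul_norm_mul_norm_sub_le hA hx₂ hx₂A hx₁A hε
    (by rwa [norm_sub_rev]) hδ
  rw [← neg_sub x₁ x₂, inner_neg_right, norm_neg] at h₂
  have hcs : ⟪p₁ - p₂, x₁ - x₂⟫ ≤ ‖p₁ - p₂‖ * ‖x₁ - x₂‖ := real_inner_le_norm _ _
  rw [inner_sub_left] at hcs
  refine le_of_mul_le_mul_right ?_ hd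
  nlinarith

end MidpointBalls

theorem isMaxOn_of_inner_eq_suppF {n : ℕ} {A : Set (EuclideanSpace ℝ (Fin n))}
    (hA : IsCompact A) {p x : EuclideanSpace ℝ (Fin n)} (hs : ⟪p, x⟫ = suppF p A) :
    IsMaxOn (fun z => ⟪p, z⟫) A x := fun z hz => by
  change ⟪p, z⟫ ≤ ⟪p, x⟫
  rw [hs]
  exact le_csSup ((hA.image (continuous_const.inner continuous_id)).bddAbove) ⟨z, hz, rfl⟩

theorem modConv_le {n : ℕ} {A : Set (EuclideanSpace ℝ (Fin n))} {ε b : ℝ}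
    (h : ∀ δ, 0 ≤ δ → HasMidpointBalls A ε δ → δ ≤ b) (hb : 0 ≤ b) : modConv A ε ≤ b :=
  Real.sSup_le (fun δ hδ => h δ hδ.1 hδ.2) hb

theorem modConv_nonneg {n : ℕ} (A : Set (EuclideanSpace ℝ (Fin n))) (ε : ℝ) :
    0 ≤ modConv A ε :=
  Real.sSup_nonneg fun _ hδ => hδ.1

theorem maximizers_close_of_functionals_close_general
    (n : ℕ) (A : Set (EuclideanSpace ℝ (Fin n)))
    (hA : IsCompact A) (hconv : Convex ℝ A)
    (ε Δ : ℝ) (hε : ε ∈ Set.Ioo 0 (Metric.diam A))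
    (p₁ p₂ x₁ x₂ : EuclideanSpace ℝ (Fin n))
    (hp₁ : ‖p₁‖ = 1) (hp₂ : 1 - Δ^2 / 2 ≤ ‖p₂‖)
    (hx₁ : x₁ ∈ A) (hx₂ : x₂ ∈ A)
    (hs₁ : (inner ℝ p₁ x₁ : ℝ) = suppF p₁ A) (hs₂ : (inner ℝ p₂ x₂ : ℝ) = suppF p₂ A)
    (hpp : ‖p₁ - p₂‖ < (4 - Δ^2) * modConv A ε / ε) :
    ‖x₁ - x₂‖ < ε := by
  obtain ⟨hε0, -⟩ := hε
  by_contra! hεx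
  have hsum : 0 < ‖p₁‖ + ‖p₂‖ := by rw [hp₁]; positivity
  have hmod : modConv A ε ≤ ε * ‖p₁ - p₂‖ / (2 * (‖p₁‖ + ‖p₂‖)) :=
    modConv_le (fun δ hδ hballs => by
      rw [le_div_iff₀ (by positivity)]
      linarith [hballs.two_mul_mul_add_norm_le hconv (isMaxOn_of_inner_eq_suppF hA hs₁)
        (isMaxOn_of_inner_eq_suppF hA hs₂) hx₁ hx₂ hε0 hεx hδ])
      (by positivity)
  rw [le_div_iff₀ (by positivity)] at hmod
  rw [lt_div_iff₀ hε0] at hpp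
  nlinarith [modConv_nonneg A ε]

/-- Lemma 2.3: for a compact uniformly convex set, maximizers of close
linear functionals are close. -/
theorem maximizers_close_of_functionals_close
    (n : ℕ) (A : Set (EuclideanSpace ℝ (Fin n)))
    (hA : IsCompact A) (hconv : Convex ℝ A) (huc : UnifConvex A)
    (ε Δ : ℝ) (hε : ε ∈ Set.Ioo 0 (Metric.diam A)) (hΔ : Δ ∈ Set.Ioo (0 : ℝ) (1/2))
    (p₁ p₂ x₁ x₂ : EuclideanSpace ℝ (Fin n))
    (hp₁ : ‖p₁‖ = 1) (hp₂ : 1 - Δ^2 / 2 ≤ ‖p₂‖) (hp₂' : ‖p₂‖ ≤ 1)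
    (hx₁ : x₁ ∈ A) (hx₂ : x₂ ∈ A)
    (hs₁ : (inner ℝ p₁ x₁ : ℝ) = suppF p₁ A) (hs₂ : (inner ℝ p₂ x₂ : ℝ) = suppF p₂ A)
    (hpp : ‖p₁ - p₂‖ < (4 - Δ^2) * modConv A ε / ε) :
    ‖x₁ - x₂‖ < ε :=
  maximizers_close_of_functionals_close_general n A hA hconv ε Δ hε p₁ p₂ x₁ x₂ hp₁ hp₂ hx₁ hx₂ hs₁
    hs₂ hpp
end

section
/- Let A ⊂ ℝⁿ be a compact convex set and let δ : [0, diam A) → [0,∞) be such that for all y₁, y₂ ∈ A with ‖y₁ − y₂‖ < diam A, the closed ball of radius δ(‖y₁−y₂‖) centered at (y₁+y₂)/2 is contained in A. Let Δ ∈ (0,1/2), let p₁, p₂ ∈ ℝⁿ with ‖p₁‖ = 1 and 1 − Δ²/2 ≤ ‖p₂‖ ≤ 1, and let x₁, x₂ ∈ A be points with ⟨p₁, x₁⟩ = s(p₁, A) and ⟨p₂, x₂⟩ = s(p₂, A) such that ‖x₁ − x₂‖ < diam A. Then ⟨p₁ − p₂, x₁ − x₂⟩ ≥ (4 − Δ²)·δ(‖x₁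 − x₂‖). -/
open Set Metric Pointwise

/-!
A support point `x` of `A` in direction `p` sees every ball `closedBall m r ⊆ A` behind it at
depth at least `r * ‖p‖`, because `m + (r / ‖p‖) • p ∈ A`. The midpoint ball of `x₁, x₂` lies
at depth `‖x₁ - x₂‖ / 2` from both, so `⟪p₁, x₁ - x₂⟫ ≥ 2 δ ‖p₁‖` and
`⟪p₂, x₂ - x₁⟫ ≥ 2 δ ‖p₂‖`; adding these and using `‖p₁‖ + ‖p₂‖ ≥ 2 - Δ² / 2` gives the bound.
-/

section SupportPoint

variable {n : ℕ} {A : Set (EuclideanSpace ℝ (Fin n))} {p x m : EuclideanSpace ℝ (Fin n)}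
  {r : ℝ}

theorem inner_le_suppF (hA : IsCompact A) (p : EuclideanSpace ℝ (Fin n))
    {y : EuclideanSpace ℝ (Fin n)} (hy : y ∈ A) : inner ℝ p y ≤ suppF p A :=
  le_csSup (hA.bddAbove_image (continuous_const.inner continuous_id).continuousOn)
    ⟨y, hy, rfl⟩

theorem mul_norm_le_inner_sub_of_closedBall_subset (hA : IsCompact A)
    (hx : inner ℝ p x = suppF p A) (hr : 0 ≤ r) (hball : closedBall m r ⊆ A) :
    r * ‖p‖ ≤ inner ℝ p (x - m) := by
  rcases eq_or_ne p 0 with rfl | hp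
  · simp
  have hp' : 0 < ‖p‖ := norm_pos_iff.2 hp
  have hy : m + (r / ‖p‖) • p ∈ A := hball <| by
    rw [mem_closedBall, dist_eq_norm, add_sub_cancel_left, norm_smul, Real.norm_of_nonneg
      (div_nonneg hr hp'.le), div_mul_cancel₀ r hp'.ne']
  have h := inner_le_suppF hA p hy
  rw [← hx, inner_add_right, real_inner_smul_right, real_inner_self_eq_norm_sq,
    div_mul_eq_mul_div, sq, ← mul_assoc, mul_div_cancel_right₀ _ hp'.ne'] at h
  rw [inner_sub_right]
  linarith

theorem two_mul_mul_norm_le_inner_sub_of_midpoint (hA : IsCompact A)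
    (hx : inner ℝ p x = suppF p A) (hr : 0 ≤ r) {y : EuclideanSpace ℝ (Fin n)}
    (hball : closedBall (midpoint ℝ x y) r ⊆ A) :
    2 * r * ‖p‖ ≤ inner ℝ p (x - y) := by
  have h := mul_norm_le_inner_sub_of_closedBall_subset hA hx hr hball
  rw [left_sub_midpoint, invOf_eq_inv, real_inner_smul_right] at h
  linarith

end SupportPoint

theorem inner_diff_ge_of_midpoint_balls_general
    (n : ℕ) (A : Set (EuclideanSpace ℝ (Fin n)))
    (hA : IsCompact A)
    (δ : ℝ → ℝ) (hδ0 : ∀ t, 0 ≤ δ t)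
    (hδ : ∀ y₁ ∈ A, ∀ y₂ ∈ A, ‖y₁ - y₂‖ < Metric.diam A →
      Metric.closedBall (midpoint ℝ y₁ y₂) (δ ‖y₁ - y₂‖) ⊆ A)
    (Δ : ℝ)
    (p₁ p₂ x₁ x₂ : EuclideanSpace ℝ (Fin n))
    (hp₁ : ‖p₁‖ = 1) (hp₂ : 1 - Δ^2 / 2 ≤ ‖p₂‖)
    (hx₁ : x₁ ∈ A) (hx₂ : x₂ ∈ A)
    (hs₁ : (inner ℝ p₁ x₁ : ℝ) = suppF p₁ A) (hs₂ : (inner ℝ p₂ x₂ : ℝ) = suppF p₂ A)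
    (hxd : ‖x₁ - x₂‖ < Metric.diam A) :
    (inner ℝ (p₁ - p₂) (x₁ - x₂) : ℝ) ≥ (4 - Δ^2) * δ ‖x₁ - x₂‖ := by
  have hball := hδ x₁ hx₁ x₂ hx₂ hxd
  have h₁ := two_mul_mul_norm_le_inner_sub_of_midpoint hA hs₁ (hδ0 _) hball
  rw [midpoint_comm] at hball
  have h₂ : 2 * δ ‖x₁ - x₂‖ * ‖p₂‖ ≤ -inner ℝ p₂ (x₁ - x₂) := by
    rw [← inner_neg_right, neg_sub]
    exact two_mul_mul_norm_le_inner_sub_of_midpoint hA hs₂ (hδ0 _) hball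
  rw [hp₁] at h₁
  rw [inner_sub_left]
  nlinarith [mul_le_mul_of_nonneg_left hp₂ (hδ0 ‖x₁ - x₂‖)]

/-- the key inner-product inequality behind Lemma 2.3. -/
theorem inner_diff_ge_of_midpoint_balls
    (n : ℕ) (A : Set (EuclideanSpace ℝ (Fin n)))
    (hA : IsCompact A) (hconv : Convex ℝ A)
    (δ : ℝ → ℝ) (hδ0 : ∀ t, 0 ≤ δ t)
    (hδ : ∀ y₁ ∈ A, ∀ y₂ ∈ A, ‖y₁ - y₂‖ < Metric.diam A →
      Metric.closedBall (midpoint ℝ y₁ y₂) (δ ‖y₁ - y₂‖) ⊆ A)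
    (Δ : ℝ) (hΔ : Δ ∈ Set.Ioo (0 : ℝ) (1/2))
    (p₁ p₂ x₁ x₂ : EuclideanSpace ℝ (Fin n))
    (hp₁ : ‖p₁‖ = 1) (hp₂ : 1 - Δ^2 / 2 ≤ ‖p₂‖) (hp₂' : ‖p₂‖ ≤ 1)
    (hx₁ : x₁ ∈ A) (hx₂ : x₂ ∈ A)
    (hs₁ : (inner ℝ p₁ x₁ : ℝ) = suppF p₁ A) (hs₂ : (inner ℝ p₂ x₂ : ℝ) = suppF p₂ A)
    (hxd : ‖x₁ - x₂‖ < Metric.diam A) :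
    (inner ℝ (p₁ - p₂) (x₁ - x₂) : ℝ) ≥ (4 - Δ^2) * δ ‖x₁ - x₂‖ :=
  inner_diff_ge_of_midpoint_balls_general n A hA δ hδ0 hδ Δ p₁ p₂ x₁ x₂ hp₁ hp₂ hx₁ hx₂ hs₁ hs₂ hxd
end

section
/- Let A ⊂ ℝⁿ be a compact uniformly convex set with modulus of convexity δ_A, let 𝒞 be a grid with step Δ ∈ (0,1/2), and suppose ε_Δ ∈ (0, diam A) satisfies δ_A(ε_Δ)/ε_Δ = Δ/(4 − Δ²). Let Â be the external polyhedral approximation of A on 𝒞. Then for every p ∈ ℝⁿ, 0 ≤ s(p, Â) − s(p, A) ≤ (8/7)·ε_Δ·Δ·‖p‖. -/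
open Set Metric Pointwise

/-! Let `x_q` maximise `⟪q, ·⟫` on `A`. Maximisers for `Δ`-close unit directions `q₁, q₂` are
`ε_Δ`-close: otherwise, shrinking the chord `[x₁, x₂]` to length `ε_Δ` at either end and pushing
its midpoint by `δ_A(ε_Δ)` along `qᵢ` gives `4 δ_A(ε_Δ) ≤ ‖q₁ - q₂‖ ε_Δ < Δ ε_Δ`, whereas the
choice of `ε_Δ` makes `4 δ_A(ε_Δ) ≥ Δ ε_Δ`. Writing `p = ∑ αᵢ qᵢ` with pairwise `Δ`-close grid
vectors, every `z ∈ Â` satisfies `⟪p, z⟫ ≤ ∑ αᵢ ⟪qᵢ, x_{qᵢ}⟫ ≤ ⟪p, x_{q₀}⟫ + Δ ε_Δ ∑ αᵢ`, and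
`∑ αᵢ ≤ 8/7 ‖p‖` since `⟪q₀, qᵢ⟫ = 1 - ‖q₀ - qᵢ‖² / 2 > 7/8`. -/

open scoped RealInnerProductSpace

section InnerProductSpace

variable {E : Type*} [NormedAddCommGroup E] [InnerProductSpace ℝ E]

lemma inner_eq_one_sub_norm_sub_sq_div_two {u v : E} (hu : ‖u‖ = 1) (hv : ‖v‖ = 1) :
    ⟪u, v⟫ = 1 - ‖u - v‖ ^ 2 / 2 := by
  rw [norm_sub_sq_real, hu, hv]
  ring

lemma mul_sum_le_norm_sum_smul {ι : Type*} [Fintype ι] {α : ι → ℝ} {q : ι → E} {u : E}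
    {Δ : ℝ} (hα : ∀ i, 0 ≤ α i) (hu : ‖u‖ = 1) (hq : ∀ i, ‖q i‖ = 1)
    (hclose : ∀ i, ‖u - q i‖ ≤ Δ) :
    (1 - Δ ^ 2 / 2) * ∑ i, α i ≤ ‖∑ i, α i • q i‖ := by
  have hinner : ∀ i, 1 - Δ ^ 2 / 2 ≤ ⟪u, q i⟫ := fun i => by
    rw [inner_eq_one_sub_norm_sub_sq_div_two hu (hq i)]
    have := pow_le_pow_left₀ (norm_nonneg _) (hclose i) 2
    linarith
  calc (1 - Δ ^ 2 / 2) * ∑ i, α i = ∑ i, α i * (1 - Δ ^ 2 / 2) := by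
        rw [Finset.mul_sum]; simp only [mul_comm]
    _ ≤ ∑ i, α i * ⟪u, q i⟫ := by gcongr with i; exacts [hα i, hinner i]
    _ = ⟪u, ∑ i, α i • q i⟫ := by simp only [inner_sum, real_inner_smul_right]
    _ ≤ ‖u‖ * ‖∑ i, α i • q i‖ := real_inner_le_norm _ _
    _ = ‖∑ i, α i • q i‖ := by rw [hu, one_mul]

lemma sum_mul_inner_le_inner_sum_add {ι : Type*} [Fintype ι] {α : ι → ℝ} {q x : ι → E}
    {j : ι} {Δ ε : ℝ} (hα : ∀ i, 0 ≤ α i) (hmax : ∀ i, ⟪q j, x i⟫ ≤ ⟪q j, x j⟫)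
    (hq : ∀ i, ‖q i - q j‖ ≤ Δ) (hx : ∀ i, ‖x i - x j‖ ≤ ε) :
    ∑ i, α i * ⟪q i, x i⟫ ≤ ⟪∑ i, α i • q i, x j⟫ + Δ * ε * ∑ i, α i := by
  have hterm : ∀ i, ⟪q i, x i⟫ ≤ ⟪q i, x j⟫ + Δ * ε := fun i => by
    have hsplit : ⟪q i, x i⟫ - ⟪q i, x j⟫ = ⟪q j, x i⟫ - ⟪q j, x j⟫ + ⟪q i - q j, x i - x j⟫ := by
      simp only [inner_sub_left, inner_sub_right]; ring
    have hcs : ⟪q i - q j, x i - x j⟫ ≤ Δ * ε :=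
      (real_inner_le_norm _ _).trans <|
        mul_le_mul (hq i) (hx i) (norm_nonneg _) ((norm_nonneg _).trans (hq i))
    linarith [hmax i]
  calc ∑ i, α i * ⟪q i, x i⟫ ≤ ∑ i, α i * (⟪q i, x j⟫ + Δ * ε) := by
        gcongr with i; exacts [hα i, hterm i]
    _ = ⟪∑ i, α i • q i, x j⟫ + Δ * ε * ∑ i, α i := by
        simp only [mul_add, Finset.sum_add_distrib, sum_inner, real_inner_smul_left,
          ← Finset.sum_mul, mul_comm]

end InnerProductSpace

variable {n : ℕ} {A B : Set (EuclideanSpace ℝ (Fin n))} {p q x a b y : EuclideanSpace ℝ (Fin n)}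

section SupportFunction

lemma le_suppF (hA : IsCompact A) (hx : x ∈ A) : ⟪p, x⟫ ≤ suppF p A :=
  le_csSup (hA.image (innerSL ℝ p).continuous).bddAbove (mem_image_of_mem _ hx)

lemma suppF_le {M : ℝ} (hA : A.Nonempty) (h : ∀ x ∈ A, ⟪p, x⟫ ≤ M) : suppF p A ≤ M :=
  csSup_le (hA.image _) (forall_mem_image.2 h)

lemma suppF_mono (hAB : A ⊆ B) (hA : A.Nonempty) (hB : BddAbove (inner ℝ p '' B)) :
    suppF p A ≤ suppF p B :=
  csSup_le_csSup hB (hA.image _) (image_mono hAB)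

lemma IsMaxOn.suppF_eq (hx : x ∈ A) (hmax : IsMaxOn (inner ℝ p) A x) : suppF p A = ⟪p, x⟫ :=
  IsGreatest.csSup_eq ⟨mem_image_of_mem _ hx, forall_mem_image.2 hmax⟩

end SupportFunction

section ModulusOfConvexity

variable {ε : ℝ}

lemma two_mul_modConv_le_inner_sub (hconv : Convex ℝ A) (ha : a ∈ A) (hy : y ∈ A)
    (hay : ‖a - y‖ = ε) (hq : ‖q‖ = 1) (hmax : IsMaxOn (inner ℝ q) A a) :
    2 * modConv A ε ≤ ⟪q, a - y⟫ := by
  rw [← le_div_iff₀' two_pos]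
  refine csSup_le ⟨0, le_rfl, fun x₁ h₁ x₂ h₂ _ => ?_⟩ ?_
  · rw [closedBall_zero, singleton_subset_iff]
    exact hconv.midpoint_mem h₁ h₂
  rintro δ ⟨hδ, hball⟩
  have hmem : midpoint ℝ a y + δ • q ∈ A :=
    hball a ha y hy hay (by simp [norm_smul, hq, abs_of_nonneg hδ])
  have hvalue : ⟪q, midpoint ℝ a y + δ • q⟫ = (⟪q, a⟫ + ⟪q, y⟫) / 2 + δ := by
    rw [inner_add_right, real_inner_smul_right, real_inner_self_eq_norm_sq, hq,
      midpoint_eq_smul_add, invOf_eq_inv, real_inner_smul_right, inner_add_right]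
    ring
  have : ⟪q, midpoint ℝ a y + δ • q⟫ ≤ ⟪q, a⟫ := hmax hmem
  rw [hvalue] at this
  rw [inner_sub_right]
  linarith

lemma two_mul_modConv_mul_norm_sub_le (hconv : Convex ℝ A) (ha : a ∈ A) (hb : b ∈ A)
    (hε : 0 ≤ ε) (hεab : ε ≤ ‖a - b‖) (hq : ‖q‖ = 1) (hmax : IsMaxOn (inner ℝ q) A a) :
    2 * modConv A ε * ‖a - b‖ ≤ ε * ⟪q, a - b⟫ := by
  rcases eq_or_ne a b with rfl | hab
  · simp
  have hpos : 0 < ‖a - b‖ := norm_pos_iff.2 (sub_ne_zero.2 hab)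
  set t := ε / ‖a - b‖
  have ht : t * ‖a - b‖ = ε := div_mul_cancel₀ ε hpos.ne'
  have hy : AffineMap.lineMap a b t ∈ A :=
    hconv.lineMap_mem ha hb ⟨div_nonneg hε hpos.le, (div_le_one hpos).2 hεab⟩
  have hay : a - AffineMap.lineMap a b t = t • (a - b) := by
    rw [AffineMap.lineMap_apply_module']; module
  have hnorm : ‖a - AffineMap.lineMap a b t‖ = ε := by
    rw [hay, norm_smul, Real.norm_of_nonneg (div_nonneg hε hpos.le), ht]
  have := two_mul_modConv_le_inner_sub hconv ha hy hnorm hq hmax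
  rw [hay, real_inner_smul_right] at this
  calc 2 * modConv A ε * ‖a - b‖ ≤ t * ⟪q, a - b⟫ * ‖a - b‖ := by gcongr
    _ = ε * ⟪q, a - b⟫ := by rw [← ht]; ring

lemma norm_sub_le_of_isMaxOn_inner {q₁ q₂ x₁ x₂ : EuclideanSpace ℝ (Fin n)}
    (hconv : Convex ℝ A) (hε : 0 ≤ ε) (hx₁ : x₁ ∈ A) (hx₂ : x₂ ∈ A) (hq₁ : ‖q₁‖ = 1)
    (hq₂ : ‖q₂‖ = 1) (hmax₁ : IsMaxOn (inner ℝ q₁) A x₁) (hmax₂ : IsMaxOn (inner ℝ q₂) A x₂)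
    (hclose : ‖q₁ - q₂‖ * ε < 4 * modConv A ε) :
    ‖x₁ - x₂‖ ≤ ε := by
  by_contra! hfar
  have hpos : 0 < ‖x₁ - x₂‖ := hε.trans_lt hfar
  have h₁ := two_mul_modConv_mul_norm_sub_le hconv hx₁ hx₂ hε hfar.le hq₁ hmax₁
  have h₂ := two_mul_modConv_mul_norm_sub_le hconv hx₂ hx₁ hε (norm_sub_rev x₁ x₂ ▸ hfar.le)
    hq₂ hmax₂
  have hsum : ⟪q₁, x₁ - x₂⟫ + ⟪q₂, x₂ - x₁⟫ = ⟪q₁ - q₂, x₁ - x₂⟫ := by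
    simp only [inner_sub_left, inner_sub_right]; ring
  have hcs : ⟪q₁ - q₂, x₁ - x₂⟫ ≤ ‖q₁ - q₂‖ * ‖x₁ - x₂‖ := real_inner_le_norm _ _
  rw [norm_sub_rev x₂ x₁] at h₂
  nlinarith [mul_lt_mul_of_pos_right hclose hpos]

end ModulusOfConvexity

lemma IsGrid.exists_sum_smul {C : Finset (EuclideanSpace ℝ (Fin n))} {Δ : ℝ} (hC : IsGrid C Δ)
    (hΔ : 0 < Δ) (hp : p ≠ 0) :
    ∃ (k : ℕ) (q : Fin (k + 1) → EuclideanSpace ℝ (Fin n)) (α : Fin (k + 1) → ℝ),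
      (∀ i, q i ∈ C) ∧ (∀ i, 0 ≤ α i) ∧ p = ∑ i, α i • q i ∧ ∀ i j, ‖q i - q j‖ < Δ := by
  by_cases hu : ‖p‖⁻¹ • p ∈ C
  · refine ⟨0, fun _ => ‖p‖⁻¹ • p, fun _ => ‖p‖, fun _ => hu, fun _ => norm_nonneg p, ?_,
      fun _ _ => by simpa using hΔ⟩
    rw [Fin.sum_univ_one, smul_inv_smul₀ (norm_ne_zero_iff.2 hp)]
  obtain ⟨k, q, α, hqC, hα, rfl, hclose⟩ := hC.2 p hp hu
  cases k with
  | zero => simp at hp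
  | succ k => exact ⟨k, q, α, hqC, fun i => (hα i).le, rfl, hclose⟩

section PolyApprox

variable {C : Finset (EuclideanSpace ℝ (Fin n))}

lemma subset_polyApprox (hA : IsCompact A) : A ⊆ polyApprox C A :=
  fun _ hx _ _ => le_suppF hA hx

lemma inner_sum_smul_le_of_mem_polyApprox {ι : Type*} [Fintype ι] {α : ι → ℝ}
    {q : ι → EuclideanSpace ℝ (Fin n)} {z : EuclideanSpace ℝ (Fin n)} (hz : z ∈ polyApprox C A)
    (hqC : ∀ i, q i ∈ C) (hα : ∀ i, 0 ≤ α i) :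
    ⟪∑ i, α i • q i, z⟫ ≤ ∑ i, α i * suppF (q i) A := by
  rw [sum_inner]
  gcongr with i
  rw [real_inner_smul_left]
  exact mul_le_mul_of_nonneg_left (hz _ (hqC i)) (hα i)

lemma inner_le_suppF_add_of_mem_polyApprox {Δ ε : ℝ} (hA : IsCompact A) (hconv : Convex ℝ A)
    (hne : A.Nonempty) (hC : IsGrid C Δ) (hΔ : Δ ∈ Ioo (0 : ℝ) (1 / 2)) (hε : 0 < ε)
    (hmod : Δ * ε ≤ 4 * modConv A ε) {z : EuclideanSpace ℝ (Fin n)} (hz : z ∈ polyApprox C A) :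
    ⟪p, z⟫ ≤ suppF p A + 8 / 7 * ε * Δ * ‖p‖ := by
  rcases eq_or_ne p 0 with rfl | hp
  · obtain ⟨a, ha⟩ := hne
    simpa using le_suppF (p := 0) hA ha
  obtain ⟨k, q, α, hqC, hα, rfl, hclose⟩ := hC.exists_sum_smul hΔ.1 hp
  have hunit : ∀ i, ‖q i‖ = 1 := fun i => hC.1 _ (hqC i)
  choose x hxA hxmax using fun i =>
    hA.exists_isMaxOn hne (innerSL ℝ (q i)).continuous.continuousOn
  have hx : ∀ i, ‖x i - x 0‖ ≤ ε := fun i =>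
    norm_sub_le_of_isMaxOn_inner hconv hε.le (hxA i) (hxA 0) (hunit i) (hunit 0) (hxmax i)
      (hxmax 0) ((mul_lt_mul_of_pos_right (hclose i 0) hε).trans_le hmod)
  have hα_sum : ∑ i, α i ≤ 8 / 7 * ‖∑ i, α i • q i‖ := by
    have := mul_sum_le_norm_sum_smul hα (hunit 0) hunit fun i => (hclose 0 i).le
    have hΔsq : Δ ^ 2 < 1 / 4 := by nlinarith [hΔ.1, hΔ.2]
    nlinarith [Finset.sum_nonneg fun i (_ : i ∈ Finset.univ) => hα i]
  calc ⟪∑ i, α i • q i, z⟫ ≤ ∑ i, α i * suppF (q i) A :=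
        inner_sum_smul_le_of_mem_polyApprox hz hqC hα
    _ = ∑ i, α i * ⟪q i, x i⟫ := by simp only [fun i => (hxmax i).suppF_eq (hxA i)]
    _ ≤ ⟪∑ i, α i • q i, x 0⟫ + Δ * ε * ∑ i, α i :=
        sum_mul_inner_le_inner_sum_add hα (fun i => hxmax 0 (hxA i)) (fun i => (hclose i 0).le) hx
    _ ≤ suppF (∑ i, α i • q i) A + 8 / 7 * ε * Δ * ‖∑ i, α i • q i‖ := by
        have := mul_le_mul_of_nonneg_left hα_sum (mul_nonneg hΔ.1.le hε.le)
        linarith [le_suppF (p := ∑ i, α i • q i) hA (hxA 0)]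

end PolyApprox

theorem suppF_polyApprox_le_general
    (n : ℕ) (A : Set (EuclideanSpace ℝ (Fin n)))
    (hA : IsCompact A) (hconv : Convex ℝ A)
    (Δ εΔ : ℝ) (hΔ : Δ ∈ Set.Ioo (0 : ℝ) (1/2))
    (hεΔ : εΔ ∈ Set.Ioo 0 (Metric.diam A))
    (heq : modConv A εΔ / εΔ = Δ / (4 - Δ^2))
    (C : Finset (EuclideanSpace ℝ (Fin n))) (hC : IsGrid C Δ) :
    ∀ p : EuclideanSpace ℝ (Fin n),
      0 ≤ suppF p (polyApprox C A) - suppF p A ∧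
      suppF p (polyApprox C A) - suppF p A ≤ 8/7 * εΔ * Δ * ‖p‖ := by
  intro p
  have hne : A.Nonempty := nonempty_iff_ne_empty.2 fun h => by
    simpa [h] using hεΔ.1.trans hεΔ.2
  have hmod : Δ * εΔ ≤ 4 * modConv A εΔ := by
    have h4 : 0 < 4 - Δ ^ 2 := by nlinarith [hΔ.1, hΔ.2]
    rw [div_eq_div_iff hεΔ.1.ne' h4.ne'] at heq
    have hD : 0 < modConv A εΔ := pos_of_mul_pos_left (heq ▸ mul_pos hΔ.1 hεΔ.1) h4.le
    nlinarith [mul_nonneg hD.le (sq_nonneg Δ)]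
  have hub : ∀ z ∈ polyApprox C A, ⟪p, z⟫ ≤ suppF p A + 8 / 7 * εΔ * Δ * ‖p‖ := fun _ hz =>
    inner_le_suppF_add_of_mem_polyApprox hA hconv hne hC hΔ hεΔ.1 hmod hz
  exact ⟨sub_nonneg.2 (suppF_mono (subset_polyApprox hA) hne ⟨_, forall_mem_image.2 hub⟩),
    sub_le_iff_le_add'.2 (suppF_le (hne.mono (subset_polyApprox hA)) hub)⟩

/-- supporting-function form of the approximation estimate. -/
theorem suppF_polyApprox_le
    (n : ℕ) (A : Set (EuclideanSpace ℝ (Fin n)))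
    (hA : IsCompact A) (hconv : Convex ℝ A) (huc : UnifConvex A)
    (Δ εΔ : ℝ) (hΔ : Δ ∈ Set.Ioo (0 : ℝ) (1/2))
    (hεΔ : εΔ ∈ Set.Ioo 0 (Metric.diam A))
    (heq : modConv A εΔ / εΔ = Δ / (4 - Δ^2))
    (C : Finset (EuclideanSpace ℝ (Fin n))) (hC : IsGrid C Δ) :
    ∀ p : EuclideanSpace ℝ (Fin n),
      0 ≤ suppF p (polyApprox C A) - suppF p A ∧
      suppF p (polyApprox C A) - suppF p A ≤ 8/7 * εΔ * Δ * ‖p‖ :=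
  suppF_polyApprox_le_general n A hA hconv Δ εΔ hΔ hεΔ heq C hC
end

section
/- Let A, B ⊂ ℝⁿ be convex compacta, let r₀ > 0, d > 0, a ∈ ℝⁿ be such that the closed ball B_{r₀}(a) ⊆ B ⊖ A ⊆ B_d(a), and let B' be a convex compact set with B ⊆ B' ⊆ B + B_h(0) for some h ≥ 0. Then B ⊖ A ⊆ B' ⊖ A ⊆ (B ⊖ A) + B_{(d/r₀)·h}(0); in particular, the Hausdorff distance satisfies h(B ⊖ A, B' ⊖ A) ≤ (d/r₀)·h. -/
open Set Metric Pointwise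

/-!
If `x + A ⊆ B + B_h(0)` and `a + B_{r₀}(0) + A ⊆ B`, then the point `y` dividing the segment
from `x` to `a` in the ratio `h : r₀` satisfies `y + A ⊆ B`: writing `x + a' = b + k` with
`‖k‖ ≤ h`, the point `y + a'` is a convex combination of `b ∈ B` and of
`a + a' + (r₀ / h) • k ∈ B`. Since `‖x - y‖ = (h / r₀) ‖y - a‖ ≤ (h / r₀) d`, every point of
`B' ⊖ A` is within `(d / r₀) h` of `B ⊖ A`.
-/

theorem subset_add_closedBall_of_forall_exists_dist_le {E : Type*} [SeminormedAddCommGroup E]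
    {s t : Set E} {ε : ℝ} (H : ∀ x ∈ t, ∃ y ∈ s, dist x y ≤ ε) : t ⊆ s + closedBall 0 ε := by
  intro x hx
  obtain ⟨y, hy, hxy⟩ := H x hx
  exact ⟨y, hy, x - y, mem_closedBall_zero_iff.2 (dist_eq_norm x y ▸ hxy), add_sub_cancel y x⟩

section NormedSpace

variable {E : Type*} [NormedAddCommGroup E] [NormedSpace ℝ E]

theorem Convex.smul_add_smul_mem_of_mem_add_closedBall {B : Set E} (hB : Convex ℝ B)
    {c p : E} {r h : ℝ} (hr : 0 < r) (hh : 0 ≤ h) (hball : closedBall c r ⊆ B)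
    (hp : p ∈ B + closedBall 0 h) : (r / (r + h)) • p + (h / (r + h)) • c ∈ B := by
  obtain ⟨b, hb, k, hk, rfl⟩ := hp
  rw [mem_closedBall_zero_iff] at hk
  rcases hh.eq_or_lt with rfl | hh
  · simpa [norm_le_zero_iff.1 hk, hr.ne'] using hb
  have hw : c + (r / h) • k ∈ B := by
    refine hball ?_
    rw [mem_closedBall, dist_eq_norm, add_sub_cancel_left, norm_smul,
      Real.norm_of_nonneg (by positivity)]
    calc r / h * ‖k‖ ≤ r / h * h := by gcongr
      _ = r := div_mul_cancel₀ r hh.ne'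
  have hcomb : (r / (r + h)) • b + (h / (r + h)) • (c + (r / h) • k) ∈ B :=
    hB hb hw (by positivity) (by positivity) (by field_simp)
  have hcoef : h / (r + h) * (r / h) = r / (r + h) := by field_simp
  convert hcomb using 1
  linear_combination (norm := module) -hcoef • k

theorem sub_smul_add_smul_eq (x a : E) {r h : ℝ} (hr : 0 < r) (hh : 0 ≤ h) :
    x - ((r / (r + h)) • x + (h / (r + h)) • a) =
      (h / r) • ((r / (r + h)) • x + (h / (r + h)) • a - a) := by
  have hrh : r + h ≠ 0 := by positivity
  have hsum : r / (r + h) + h / (r + h) = 1 := by field_simp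
  have hcoef : h / r * (r / (r + h)) = h / (r + h) := by field_simp
  linear_combination (norm := module) (-hcoef - hsum) • x + (hcoef - (h / r) * hsum) • a

end NormedSpace

section GeomDiff

variable {n : ℕ} {A B B' : Set (EuclideanSpace ℝ (Fin n))}

theorem geomDiff_mono_left (hBB' : B ⊆ B') : geomDiff B A ⊆ geomDiff B' A :=
  fun _ hx a' ha' => hBB' (hx a' ha')

theorem closedBall_add_subset_of_closedBall_subset_geomDiff {a a' : EuclideanSpace ℝ (Fin n)}
    {r : ℝ} (hball : closedBall a r ⊆ geomDiff B A) (ha' : a' ∈ A) :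
    closedBall (a + a') r ⊆ B := by
  intro z hz
  have hz' : z - a' ∈ closedBall a r := by
    rwa [mem_closedBall, dist_eq_norm, sub_sub, add_comm a' a, ← dist_eq_norm]
  simpa using hball hz' a' ha'

theorem smul_add_smul_mem_geomDiff (hB : Convex ℝ B) {a x : EuclideanSpace ℝ (Fin n)}
    {r h : ℝ} (hr : 0 < r) (hh : 0 ≤ h) (hball : closedBall a r ⊆ geomDiff B A)
    (hB'B : B' ⊆ B + closedBall 0 h) (hx : x ∈ geomDiff B' A) :
    (r / (r + h)) • x + (h / (r + h)) • a ∈ geomDiff B A := by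
  intro a' ha'
  have hsum : r / (r + h) + h / (r + h) = 1 := by field_simp
  convert hB.smul_add_smul_mem_of_mem_add_closedBall hr hh
    (closedBall_add_subset_of_closedBall_subset_geomDiff hball ha') (hB'B (hx a' ha')) using 1
  linear_combination (norm := module) -hsum • a'

end GeomDiff

theorem geomDiff_stability_general
    (n : ℕ) (A B B' : Set (EuclideanSpace ℝ (Fin n)))
    (hBc : Convex ℝ B)
    (r₀ d h : ℝ) (hr₀ : 0 < r₀) (hd : 0 < d) (hh : 0 ≤ h)
    (a : EuclideanSpace ℝ (Fin n))
    (hball : Metric.closedBall a r₀ ⊆ geomDiff B A)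
    (hdball : geomDiff B A ⊆ Metric.closedBall a d)
    (hBB' : B ⊆ B') (hB'B : B' ⊆ B + Metric.closedBall 0 h) :
    geomDiff B A ⊆ geomDiff B' A ∧
    geomDiff B' A ⊆ geomDiff B A + Metric.closedBall 0 (d / r₀ * h) ∧
    Metric.hausdorffDist (geomDiff B A) (geomDiff B' A) ≤ d / r₀ * h := by
  have hsub := geomDiff_mono_left (A := A) hBB'
  have hclose : ∀ x ∈ geomDiff B' A, ∃ y ∈ geomDiff B A, dist x y ≤ d / r₀ * h := by
    intro x hx
    have hy := smul_add_smul_mem_geomDiff hBc hr₀ hh hball hB'B hx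
    refine ⟨_, hy, ?_⟩
    have hya : ‖(r₀ / (r₀ + h)) • x + (h / (r₀ + h)) • a - a‖ ≤ d := by
      simpa [dist_eq_norm] using hdball hy
    calc dist x _ = h / r₀ * ‖(r₀ / (r₀ + h)) • x + (h / (r₀ + h)) • a - a‖ := by
          rw [dist_eq_norm, sub_smul_add_smul_eq x a hr₀ hh, norm_smul,
            Real.norm_of_nonneg (by positivity)]
      _ ≤ h / r₀ * d := by gcongr
      _ = d / r₀ * h := by ring
  have hε : 0 ≤ d / r₀ * h := by positivity
  refine ⟨hsub, subset_add_closedBall_of_forall_exists_dist_le hclose,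
    hausdorffDist_le_of_mem_dist hε (fun x hx => ⟨x, hsub hx, by simpa using hε⟩) ?_⟩
  exact fun x hx => (hclose x hx).imp fun y ⟨hy, hxy⟩ => ⟨hy, dist_comm y x ▸ hxy⟩

/-- stability of the geometric difference under outer enlargement of `B`. -/
theorem geomDiff_stability
    (n : ℕ) (A B B' : Set (EuclideanSpace ℝ (Fin n)))
    (hA : IsCompact A) (hAc : Convex ℝ A)
    (hB : IsCompact B) (hBc : Convex ℝ B)
    (hB' : IsCompact B') (hB'c : Convex ℝ B')
    (r₀ d h : ℝ) (hr₀ : 0 < r₀) (hd : 0 < d) (hh : 0 ≤ h)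
    (a : EuclideanSpace ℝ (Fin n))
    (hball : Metric.closedBall a r₀ ⊆ geomDiff B A)
    (hdball : geomDiff B A ⊆ Metric.closedBall a d)
    (hBB' : B ⊆ B') (hB'B : B' ⊆ B + Metric.closedBall 0 h) :
    geomDiff B A ⊆ geomDiff B' A ∧
    geomDiff B' A ⊆ geomDiff B A + Metric.closedBall 0 (d / r₀ * h) ∧
    Metric.hausdorffDist (geomDiff B A) (geomDiff B' A) ≤ d / r₀ * h :=
  geomDiff_stability_general n A B B' hBc r₀ d h hr₀ hd hh a hball hdball hBB' hB'B
end

section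
/- Let A ⊂ ℝⁿ be a compact uniformly convex set with modulus of convexity δ_A, and suppose there is a constant C > 0 with δ_A(ε) ≥ C·ε² for all ε ∈ (0, diam A). Let r₀ = sup{r ≥ 0 : there exists a ∈ ℝⁿ with B_r(a) ⊆ A}, let a ∈ ℝⁿ be such that B_{r₀}(a) ⊆ A, and let d = sup_{x∈A} ‖x − a‖. Then d ≤ max{2r₀, r₀ + √(r₀/(2C))}. -/
/-! Let `r₀` be the inradius and `x ∈ A` with `d = ‖x - a‖ > r₀`. For `0 ≤ t < r₀`, every point
`x₂` of `B_t(a)` satisfies `d - t ≤ ‖x - x₂‖ < diam A`, so the modulus of convexity puts a ball of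
radius `C (d - t)²` around `midpoint x x₂`. These midpoints fill `B_{t/2}(midpoint x a)`, hence `A`
contains a ball of radius `t/2 + C (d - t)²`, which therefore is at most `r₀`. Letting `t → r₀`
gives `C (d - r₀)² ≤ r₀ / 2`, i.e. `d ≤ r₀ + √(r₀ / (2C))`. If `r₀ = 0`, the ball around the
midpoint of `x` and `midpoint x a` alone forces `d = 0`. -/

open Set Metric Pointwise

open Filter Topology

noncomputable def inradius {E : Type*} [PseudoMetricSpace E] (A : Set E) : ℝ :=
  sSup {r : ℝ | 0 ≤ r ∧ ∃ c : E, closedBall c r ⊆ A}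

theorem inradius_nonneg {E : Type*} [PseudoMetricSpace E] (A : Set E) : 0 ≤ inradius A :=
  Real.sSup_nonneg fun _ hr => hr.1

section Inradius

variable {E : Type*} [NormedAddCommGroup E] [NormedSpace ℝ E] {A : Set E}

theorem le_inradius_of_ball_subset [Nontrivial E] (hA : Bornology.IsBounded A) {c : E} {ρ : ℝ}
    (h : ball c ρ ⊆ A) : ρ ≤ inradius A := by
  have hbdd : BddAbove {r : ℝ | 0 ≤ r ∧ ∃ c : E, closedBall c r ⊆ A} := by
    refine ⟨diam A, ?_⟩
    rintro r ⟨hr, c, hc⟩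
    have := diam_mono hc hA
    rw [diam_closedBall_eq c hr] at this
    linarith
  refine le_of_forall_lt_imp_le_of_dense fun R hR => ?_
  rcases lt_or_ge R 0 with hR₀ | hR₀
  · exact hR₀.le.trans (inradius_nonneg A)
  · exact le_csSup hbdd ⟨hR₀, c, (closedBall_subset_ball hR).trans h⟩

theorem norm_sub_add_le_diam_of_closedBall_subset (hA : Bornology.IsBounded A) {a x : E} {r : ℝ}
    (hr : 0 ≤ r) (ha : closedBall a r ⊆ A) (hx : x ∈ A) (hxa : x ≠ a) :
    ‖x - a‖ + r ≤ diam A := by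
  have hd : 0 < ‖x - a‖ := norm_pos_iff.2 (sub_ne_zero.2 hxa)
  set y := a - (r / ‖x - a‖) • (x - a)
  have hy : y ∈ A := ha <| by
    rw [mem_closedBall, dist_eq_norm, sub_sub_cancel_left, norm_neg, norm_smul,
      Real.norm_of_nonneg (by positivity), div_mul_cancel₀ _ hd.ne']
  calc ‖x - a‖ + r = ‖(1 + r / ‖x - a‖) • (x - a)‖ := by
        rw [norm_smul, Real.norm_of_nonneg (by positivity)]; field_simp
    _ = dist x y := by rw [dist_eq_norm]; congr 1; simp only [y]; module
    _ ≤ diam A := dist_le_diam_of_mem hA hx hy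

end Inradius

section ModConv

variable {n : ℕ} {A : Set (EuclideanSpace ℝ (Fin n))}

theorem ball_midpoint_subset_of_modConv {x₁ x₂ : EuclideanSpace ℝ (Fin n)} (h₁ : x₁ ∈ A)
    (h₂ : x₂ ∈ A) : ball (midpoint ℝ x₁ x₂) (modConv A ‖x₁ - x₂‖) ⊆ A := by
  intro y hy
  rw [mem_ball, modConv] at hy
  refine (exists_lt_of_lt_csSup ?_ hy).elim
    fun δ ⟨⟨_, hδ⟩, hyδ⟩ => hδ x₁ h₁ x₂ h₂ rfl (mem_closedBall.2 hyδ.le)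
  refine nonempty_iff_ne_empty.2 fun h => ?_
  rw [h, Real.sSup_empty] at hy
  exact dist_nonneg.not_gt hy

variable {Cq : ℝ} (hquad : ∀ ε ∈ Ioo 0 (diam A), Cq * ε ^ 2 ≤ modConv A ε)
include hquad

theorem mul_sq_le_inradius (hA : Bornology.IsBounded A) {x₁ x₂ : EuclideanSpace ℝ (Fin n)}
    (h₁ : x₁ ∈ A) (h₂ : x₂ ∈ A) (hpos : 0 < ‖x₁ - x₂‖) (hlt : ‖x₁ - x₂‖ < diam A) :
    Cq * ‖x₁ - x₂‖ ^ 2 ≤ inradius A :=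
  have : Nontrivial (EuclideanSpace ℝ (Fin n)) := ⟨⟨x₁, x₂, sub_ne_zero.1 (norm_pos_iff.1 hpos)⟩⟩
  le_inradius_of_ball_subset hA <|
    (ball_subset_ball (hquad _ ⟨hpos, hlt⟩)).trans (ball_midpoint_subset_of_modConv h₁ h₂)

theorem ball_midpoint_subset_of_closedBall_subset (hA : Bornology.IsBounded A) (hCq : 0 < Cq)
    {a x : EuclideanSpace ℝ (Fin n)} {r t : ℝ} (ha : closedBall a r ⊆ A) (hx : x ∈ A)
    (ht : 0 ≤ t) (htr : t < r) (htx : t < ‖x - a‖) :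
    ball (midpoint ℝ x a) (t / 2 + Cq * (‖x - a‖ - t) ^ 2) ⊆ A := by
  set d := ‖x - a‖
  have hdiam : d + r ≤ diam A := norm_sub_add_le_diam_of_closedBall_subset hA (ht.trans htr.le)
    ha hx (sub_ne_zero.1 (norm_pos_iff.1 (ht.trans_lt htx)))
  rw [← add_zero (midpoint ℝ x a), ← closedBall_add_ball (by linarith)
    (mul_pos hCq (pow_pos (sub_pos.2 htx) 2))]
  rintro _ ⟨p, hp, q, hq, rfl⟩
  -- `p` is the midpoint of `x` and its reflection `x₂` through `p`, a point of `B_t(a)`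
  set x₂ := Equiv.pointReflection p x
  have hx₂a : x₂ - a = (2 : ℝ) • (p - midpoint ℝ x a) := by
    simp only [x₂, Equiv.pointReflection_apply, midpoint_eq_smul_add, invOf_eq_inv,
      vsub_eq_sub, vadd_eq_add]
    module
  have hx₂ : ‖x₂ - a‖ ≤ t := by
    rw [mem_closedBall, dist_eq_norm] at hp
    rw [hx₂a, norm_smul, Real.norm_two]
    linarith
  have hsub : (x - a) - (x₂ - a) = x - x₂ := sub_sub_sub_cancel_right x x₂ a
  have hε₁ : d - t ≤ ‖x - x₂‖ := by
    have := norm_sub_norm_le (x - a) (x₂ - a)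
    rw [hsub] at this
    linarith
  have hε₂ : ‖x - x₂‖ ≤ d + t := by
    have := norm_sub_le (x - a) (x₂ - a)
    rw [hsub] at this
    linarith
  have hK : Cq * (d - t) ^ 2 ≤ modConv A ‖x - x₂‖ :=
    (mul_le_mul_of_nonneg_left (pow_le_pow_left₀ (by linarith) hε₁ 2) hCq.le).trans
      (hquad _ ⟨by linarith, by linarith⟩)
  have hball := ball_midpoint_subset_of_modConv hx <|
    ha (mem_closedBall.2 ((dist_eq_norm x₂ a).trans_le (hx₂.trans htr.le)))
  rw [midpoint_pointReflection_right] at hball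
  exact hball (ball_subset_ball hK (by simpa using hq))

theorem mul_sq_sub_inradius_le (hA : Bornology.IsBounded A) (hCq : 0 < Cq)
    {a x : EuclideanSpace ℝ (Fin n)} (ha : closedBall a (inradius A) ⊆ A) (hr : 0 < inradius A)
    (hx : x ∈ A) (hxa : inradius A < ‖x - a‖) :
    Cq * (‖x - a‖ - inradius A) ^ 2 ≤ inradius A / 2 := by
  set r₀ := inradius A
  set d := ‖x - a‖
  have : Nontrivial (EuclideanSpace ℝ (Fin n)) :=
    ⟨⟨x, a, sub_ne_zero.1 (norm_pos_iff.1 (hr.trans hxa))⟩⟩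
  have hle : ∀ t ∈ Ioo 0 r₀, t / 2 + Cq * (d - t) ^ 2 ≤ r₀ := fun t ht =>
    le_inradius_of_ball_subset hA <| ball_midpoint_subset_of_closedBall_subset hquad hA hCq ha hx
      ht.1.le ht.2 (ht.2.trans hxa)
  have hlim : Tendsto (fun t => t / 2 + Cq * (d - t) ^ 2) (𝓝[<] r₀)
      (𝓝 (r₀ / 2 + Cq * (d - r₀) ^ 2)) :=
    (Continuous.continuousWithinAt (by fun_prop)).tendsto
  have := le_of_tendsto hlim (eventually_of_mem (Ioo_mem_nhdsLT hr) hle)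
  linarith

theorem norm_sub_le_inradius_add_sqrt (hconv : Convex ℝ A) (hA : Bornology.IsBounded A)
    (hCq : 0 < Cq) {a x : EuclideanSpace ℝ (Fin n)} (ha : closedBall a (inradius A) ⊆ A)
    (hx : x ∈ A) : ‖x - a‖ ≤ inradius A + √(inradius A / (2 * Cq)) := by
  rcases le_or_gt ‖x - a‖ (inradius A) with hle | hlt
  · exact le_add_of_le_of_nonneg hle (Real.sqrt_nonneg _)
  have haA : a ∈ A := ha (mem_closedBall_self (inradius_nonneg A))
  rcases (inradius_nonneg A).eq_or_lt with h0 | h0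
  · have hpos : 0 < ‖x - a‖ := h0 ▸ hlt
    have hm : midpoint ℝ x a ∈ A := hconv.segment_subset hx haA (midpoint_mem_segment x a)
    have hε : ‖x - midpoint ℝ x a‖ = ‖x - a‖ / 2 := by
      rw [← dist_eq_norm, ← dist_eq_norm, dist_left_midpoint, Real.norm_two]
      ring
    have hd : ‖x - a‖ ≤ diam A := (dist_eq_norm x a).symm.trans_le (dist_le_diam_of_mem hA hx haA)
    have := mul_sq_le_inradius hquad hA hx hm (by rw [hε]; exact half_pos hpos)
      (by rw [hε]; linarith)
    rw [← h0, hε] at this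
    exact absurd this (not_le.2 (mul_pos hCq (pow_pos (half_pos hpos) 2)))
  · have := mul_sq_sub_inradius_le hquad hA hCq ha h0 hx hlt
    rw [← sub_le_iff_le_add', Real.le_sqrt (by linarith) (by positivity),
      le_div_iff₀ (by positivity)]
    linarith

end ModConv

theorem farthest_dist_le_of_quadratic_modConv_general
    (n : ℕ) (A : Set (EuclideanSpace ℝ (Fin n)))
    (hA : IsCompact A) (hconv : Convex ℝ A)
    (Cq : ℝ) (hCq : 0 < Cq)
    (hquad : ∀ ε ∈ Set.Ioo 0 (Metric.diam A), Cq * ε^2 ≤ modConv A ε)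
    (r₀ d : ℝ) (a : EuclideanSpace ℝ (Fin n))
    (hr₀ : r₀ = sSup {r : ℝ | 0 ≤ r ∧ ∃ c : EuclideanSpace ℝ (Fin n),
      Metric.closedBall c r ⊆ A})
    (ha : Metric.closedBall a r₀ ⊆ A)
    (hd : d = sSup ((fun x => ‖x - a‖) '' A)) :
    d ≤ max (2 * r₀) (r₀ + Real.sqrt (r₀ / (2 * Cq))) := by
  change r₀ = inradius A at hr₀
  subst hr₀ hd
  have haA : a ∈ A := ha (mem_closedBall_self (inradius_nonneg A))
  refine le_max_of_le_right (csSup_le ⟨_, mem_image_of_mem _ haA⟩ ?_)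
  rintro _ ⟨x, hx, rfl⟩
  exact norm_sub_le_inradius_add_sqrt hquad hconv hA.isBounded hCq ha hx

/-- for a set with modulus of convexity of quadratic order,
`d ≤ max{2r₀, r₀ + √(r₀/(2C))}`. -/
theorem farthest_dist_le_of_quadratic_modConv
    (n : ℕ) (A : Set (EuclideanSpace ℝ (Fin n)))
    (hA : IsCompact A) (hconv : Convex ℝ A) (huc : UnifConvex A)
    (Cq : ℝ) (hCq : 0 < Cq)
    (hquad : ∀ ε ∈ Set.Ioo 0 (Metric.diam A), Cq * ε^2 ≤ modConv A ε)
    (r₀ d : ℝ) (a : EuclideanSpace ℝ (Fin n))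
    (hr₀ : r₀ = sSup {r : ℝ | 0 ≤ r ∧ ∃ c : EuclideanSpace ℝ (Fin n),
      Metric.closedBall c r ⊆ A})
    (ha : Metric.closedBall a r₀ ⊆ A)
    (hd : d = sSup ((fun x => ‖x - a‖) '' A)) :
    d ≤ max (2 * r₀) (r₀ + Real.sqrt (r₀ / (2 * Cq))) :=
  farthest_dist_le_of_quadratic_modConv_general n A hA hconv Cq hCq hquad r₀ d a hr₀ ha hd
end

section
/- Let A, B ⊂ ℝⁿ be convex compacta such that the Minkowski sum A + B is uniformly convex with modulus of convexity δ_{A+B}. Let 𝒞 be a grid with step Δ ∈ (0,1/2) and suppose ε_Δ ∈ (0, diam(A+B)) satisfies δ_{A+B}(ε_Δ)/ε_Δ = Δ/(4 − Δ²). Let Â, B̂, and \widehat{A+B} be the external polyhedral approximations on 𝒞 of A, B, and A + B, respectively. Then h(Â + B̂, \widehat{A+B}) ≤ (8/7)·ε_Δ·Δ. -/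
open Set Metric Pointwise

/-!
Let `M = A + B`. Clearly `M ⊆ Â + B̂`, and `Â + B̂ ⊆ \widehat{M}` since
`s(p, A) + s(p, B) ≤ s(p, M)`, so it suffices to show that every `x ∈ \widehat{M}` lies within
`8/7 · εΔ · Δ` of `M`. Projecting `x` onto `M` reduces this to `⟪p, x⟫ ≤ s(p, M) + 8/7 · εΔ · Δ`
for unit `p`.
Write `p = ∑ αᵢ qᵢ` with grid vectors `qᵢ` that are pairwise `Δ`-close. Uniform convexity forces
the points of `M` at which the `qᵢ` attain their maxima to be `εΔ`-close: if two of them were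
farther apart, the ball of radius `δ(εΔ)` in the middle of a chord of length `εΔ` would stick out
of one of the supporting half-spaces. The choice of `εΔ` makes `4 δ(εΔ) > εΔ · Δ`, which is
exactly what this needs. Hence `⟪p, x⟫ ≤ s(p, M) + Δ · εΔ · ∑ αᵢ`, and `∑ αᵢ ≤ 8/7` because
`⟪q_{i₀}, qᵢ⟫ ≥ 1 - Δ²/2 ≥ 7/8`.
-/

open scoped InnerProductSpace

section InnerProductSpace

variable {E : Type*} [NormedAddCommGroup E] [InnerProductSpace ℝ E]

lemma inner_le_inner_add_of_isMaxOn {M : Set E} {q q' x y : E}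
    (hy : IsMaxOn (fun z => ⟪q', z⟫_ℝ) M y) (hx : x ∈ M) :
    ⟪q, x⟫_ℝ ≤ ⟪q, y⟫_ℝ + ‖q - q'‖ * ‖x - y‖ := by
  have hsplit : ⟪q, x⟫_ℝ - ⟪q, y⟫_ℝ = ⟪q - q', x - y⟫_ℝ + ⟪q', x - y⟫_ℝ := by
    simp only [inner_sub_left, inner_sub_right]; ring
  have hq' : ⟪q', x - y⟫_ℝ ≤ 0 := by
    rw [inner_sub_right]; linarith [isMaxOn_iff.mp hy x hx]
  linarith [real_inner_le_norm (q - q') (x - y)]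

variable {A : Set E} {ε r : ℝ}

/-- Push a unit normal `q` from the midpoint of the chord `[a, a + (ε/‖a - b‖)(b - a)]`: the ball
of radius `r` around it stays in `A`, while `a` maximizes `⟪q, ·⟫` on `A`. -/
lemma two_mul_norm_mul_le_inner_of_isMaxOn (hconv : Convex ℝ A) (hr : 0 ≤ r)
    (hball : ∀ y₁ ∈ A, ∀ y₂ ∈ A, ‖y₁ - y₂‖ = ε → closedBall (midpoint ℝ y₁ y₂) r ⊆ A)
    {q a b : E} (hq : ‖q‖ = 1) (ha : a ∈ A) (hb : b ∈ A)
    (hmax : IsMaxOn (fun z => ⟪q, z⟫_ℝ) A a) (hε : 0 < ε) (hεab : ε ≤ ‖a - b‖) :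
    2 * ‖a - b‖ * r ≤ ε * ⟪q, a - b⟫_ℝ := by
  set d := ‖a - b‖
  have hd : 0 < d := hε.trans_le hεab
  set t := ε / d
  have ht : t ∈ Icc (0 : ℝ) 1 := ⟨by positivity, div_le_one_of_le₀ hεab hd.le⟩
  have hy : a + t • (b - a) ∈ A := hconv.add_smul_sub_mem ha hb ht
  have hchord : ‖a - (a + t • (b - a))‖ = ε := by
    rw [show a - (a + t • (b - a)) = t • (a - b) by module, norm_smul, Real.norm_of_nonneg ht.1,
      div_mul_cancel₀ ε hd.ne']
  have hmid : midpoint ℝ a (a + t • (b - a)) = a - (t / 2) • (a - b) := by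
    rw [midpoint_eq_smul_add, invOf_eq_inv]; module
  have hpush : midpoint ℝ a (a + t • (b - a)) + r • q ∈ A :=
    hball _ ha _ hy hchord (by rw [mem_closedBall, dist_self_add_left, norm_smul, hq,
      mul_one, Real.norm_of_nonneg hr])
  have hle := isMaxOn_iff.mp hmax _ hpush
  rw [hmid, inner_add_right, inner_sub_right, real_inner_smul_right, real_inner_smul_right,
    real_inner_self_eq_norm_sq, hq] at hle
  have hεt : ε = t * d := (div_mul_cancel₀ ε hd.ne').symm
  rw [hεt]
  nlinarith

lemma norm_sub_le_of_isMaxOn (hconv : Convex ℝ A)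
    (hball : ∀ y₁ ∈ A, ∀ y₂ ∈ A, ‖y₁ - y₂‖ = ε → closedBall (midpoint ℝ y₁ y₂) r ⊆ A)
    {q₁ q₂ x₁ x₂ : E} (hq₁ : ‖q₁‖ = 1) (hq₂ : ‖q₂‖ = 1) (hx₁ : x₁ ∈ A) (hx₂ : x₂ ∈ A)
    (hmax₁ : IsMaxOn (fun z => ⟪q₁, z⟫_ℝ) A x₁) (hmax₂ : IsMaxOn (fun z => ⟪q₂, z⟫_ℝ) A x₂)
    (hε : 0 < ε) (hq : ε * ‖q₁ - q₂‖ < 4 * r) :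
    ‖x₁ - x₂‖ ≤ ε := by
  by_contra! hfar
  have hr : 0 ≤ r := by nlinarith [norm_nonneg (q₁ - q₂)]
  have h₁ := two_mul_norm_mul_le_inner_of_isMaxOn hconv hr hball hq₁ hx₁ hx₂ hmax₁ hε hfar.le
  have h₂ := two_mul_norm_mul_le_inner_of_isMaxOn hconv hr hball hq₂ hx₂ hx₁ hmax₂ hε
    (by rw [norm_sub_rev]; exact hfar.le)
  rw [norm_sub_rev x₂] at h₂
  have hsum : ⟪q₁, x₁ - x₂⟫_ℝ + ⟪q₂, x₂ - x₁⟫_ℝ = ⟪q₁ - q₂, x₁ - x₂⟫_ℝ := by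
    simp only [inner_sub_left, inner_sub_right]; ring
  have hcs := real_inner_le_norm (q₁ - q₂) (x₁ - x₂)
  nlinarith [norm_nonneg (x₁ - x₂)]

variable {ι : Type*} [Fintype ι] {q : ι → E} {α : ι → ℝ} {p : E}

lemma mul_sum_le_norm_of_eq_sum_smul {Δ : ℝ} (hq : ∀ i, ‖q i‖ = 1) (hα : ∀ i, 0 ≤ α i)
    (hp : p = ∑ i, α i • q i) (hclose : ∀ i j, ‖q i - q j‖ ≤ Δ) :
    (1 - Δ ^ 2 / 2) * ∑ i, α i ≤ ‖p‖ := by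
  cases isEmpty_or_nonempty ι with
  | inl _ => simp
  | inr hι =>
    obtain ⟨i₀⟩ := hι
    have hnear : ∀ i, 1 - Δ ^ 2 / 2 ≤ ⟪q i₀, q i⟫_ℝ := fun i => by
      have hsq := norm_sub_sq_real (q i₀) (q i)
      rw [hq, hq] at hsq
      nlinarith [pow_le_pow_left₀ (norm_nonneg _) (hclose i₀ i) 2]
    calc (1 - Δ ^ 2 / 2) * ∑ i, α i = ∑ i, α i * (1 - Δ ^ 2 / 2) := by
          rw [Finset.mul_sum]; simp only [mul_comm]
      _ ≤ ∑ i, α i * ⟪q i₀, q i⟫_ℝ :=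
          Finset.sum_le_sum fun i _ => mul_le_mul_of_nonneg_left (hnear i) (hα i)
      _ = ⟪q i₀, p⟫_ℝ := by simp only [hp, inner_sum, real_inner_smul_right]
      _ ≤ ‖p‖ := by simpa [hq] using real_inner_le_norm (q i₀) p

lemma inner_le_inner_add_of_eq_sum_smul {M : Set E} {X : ι → E} {x : E} {Δ : ℝ} (i₀ : ι)
    (hα : ∀ i, 0 ≤ α i) (hp : p = ∑ i, α i • q i) (hx : ∀ i, ⟪q i, x⟫_ℝ ≤ ⟪q i, X i⟫_ℝ)
    (hXM : ∀ i, X i ∈ M) (hmax : IsMaxOn (fun z => ⟪q i₀, z⟫_ℝ) M (X i₀))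
    (hq : ∀ i, ‖q i - q i₀‖ ≤ Δ) (hX : ∀ i, ‖X i - X i₀‖ ≤ ε) :
    ⟪p, x⟫_ℝ ≤ ⟪p, X i₀⟫_ℝ + Δ * ε * ∑ i, α i := by
  have hterm : ∀ i, ⟪q i, x⟫_ℝ ≤ ⟪q i, X i₀⟫_ℝ + Δ * ε := fun i =>
    calc ⟪q i, x⟫_ℝ ≤ ⟪q i, X i⟫_ℝ := hx i
      _ ≤ ⟪q i, X i₀⟫_ℝ + ‖q i - q i₀‖ * ‖X i - X i₀‖ := inner_le_inner_add_of_isMaxOn hmax (hXM i)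
      _ ≤ ⟪q i, X i₀⟫_ℝ + Δ * ε := by
          gcongr
          · exact (norm_nonneg _).trans (hq i)
          · exact hq i
          · exact hX i
  calc ⟪p, x⟫_ℝ = ∑ i, α i * ⟪q i, x⟫_ℝ := by simp only [hp, sum_inner, real_inner_smul_left]
    _ ≤ ∑ i, α i * (⟪q i, X i₀⟫_ℝ + Δ * ε) :=
        Finset.sum_le_sum fun i _ => mul_le_mul_of_nonneg_left (hterm i) (hα i)
    _ = ⟪p, X i₀⟫_ℝ + Δ * ε * ∑ i, α i := by
        simp only [hp, sum_inner, real_inner_smul_left, mul_add, Finset.sum_add_distrib,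
          Finset.mul_sum]
        congr 1
        exact Finset.sum_congr rfl fun i _ => by ring

end InnerProductSpace

section EuclideanSpace

variable {n : ℕ} {M : Set (EuclideanSpace ℝ (Fin n))}

lemma exists_isMaxOn_inner (hM : IsCompact M) (hne : M.Nonempty) (q : EuclideanSpace ℝ (Fin n)) :
    ∃ x ∈ M, IsMaxOn (fun z => ⟪q, z⟫_ℝ) M x :=
  hM.exists_isMaxOn hne (continuous_const.inner continuous_id).continuousOn

lemma le_suppF_s15 (hM : IsCompact M) {p x : EuclideanSpace ℝ (Fin n)} (hx : x ∈ M) :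
    ⟪p, x⟫_ℝ ≤ suppF p M :=
  le_csSup ((hM.image (continuous_const.inner continuous_id)).bddAbove) ⟨x, hx, rfl⟩

lemma suppF_eq_of_isMaxOn {p x : EuclideanSpace ℝ (Fin n)} (hx : x ∈ M)
    (hmax : IsMaxOn (fun z => ⟪p, z⟫_ℝ) M x) : suppF p M = ⟪p, x⟫_ℝ :=
  IsGreatest.csSup_eq ⟨⟨x, hx, rfl⟩, by rintro _ ⟨y, hy, rfl⟩; exact isMaxOn_iff.mp hmax y hy⟩

lemma suppF_add_le {A B : Set (EuclideanSpace ℝ (Fin n))} (hA : IsCompact A) (hB : IsCompact B)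
    (hAne : A.Nonempty) (hBne : B.Nonempty) (p : EuclideanSpace ℝ (Fin n)) :
    suppF p A + suppF p B ≤ suppF p (A + B) := by
  obtain ⟨a, ha, hamax⟩ := exists_isMaxOn_inner hA hAne p
  obtain ⟨b, hb, hbmax⟩ := exists_isMaxOn_inner hB hBne p
  rw [suppF_eq_of_isMaxOn ha hamax, suppF_eq_of_isMaxOn hb hbmax, ← inner_add_right]
  exact le_suppF_s15 (hA.add hB) (add_mem_add ha hb)

lemma subset_polyApprox_s15 (hM : IsCompact M) (C : Finset (EuclideanSpace ℝ (Fin n))) :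
    M ⊆ polyApprox C M :=
  fun _ hx _ _ => le_suppF_s15 hM hx

lemma add_polyApprox_subset {A B : Set (EuclideanSpace ℝ (Fin n))} (hA : IsCompact A)
    (hB : IsCompact B) (hAne : A.Nonempty) (hBne : B.Nonempty)
    (C : Finset (EuclideanSpace ℝ (Fin n))) :
    polyApprox C A + polyApprox C B ⊆ polyApprox C (A + B) := by
  rintro _ ⟨a, ha, b, hb, rfl⟩ p hp
  rw [inner_add_right]
  linarith [ha p hp, hb p hp, suppF_add_le hA hB hAne hBne p]

/-- The `sSup` defining `modConv` need not be attained: the open ball is covered by admissible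
radii below it, and closedness of `M` gives the closed ball. -/
lemma closedBall_modConv_subset (hcl : IsClosed M) (hconv : Convex ℝ M)
    {x₁ x₂ : EuclideanSpace ℝ (Fin n)} (h₁ : x₁ ∈ M) (h₂ : x₂ ∈ M) {ε : ℝ}
    (hd : ‖x₁ - x₂‖ = ε) :
    closedBall (midpoint ℝ x₁ x₂) (modConv M ε) ⊆ M := by
  have hzero : (0 : ℝ) ∈ {δ : ℝ | 0 ≤ δ ∧ ∀ y₁ ∈ M, ∀ y₂ ∈ M, ‖y₁ - y₂‖ = ε →
      closedBall (midpoint ℝ y₁ y₂) δ ⊆ M} :=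
    ⟨le_rfl, fun y₁ hy₁ y₂ hy₂ _ => by
      rw [closedBall_zero, singleton_subset_iff]; exact hconv.midpoint_mem hy₁ hy₂⟩
  have hball : ball (midpoint ℝ x₁ x₂) (modConv M ε) ⊆ M := fun z hz => by
    obtain ⟨δ, ⟨-, hδ⟩, hzδ⟩ := exists_lt_of_lt_csSup ⟨0, hzero⟩ (mem_ball.mp hz)
    exact hδ x₁ h₁ x₂ h₂ hd (mem_closedBall.mpr hzδ.le)
  rcases lt_or_ge 0 (modConv M ε) with hpos | hnonpos
  · rw [← closure_ball _ hpos.ne']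
    exact closure_minimal hball hcl
  · intro z hz
    rw [dist_le_zero.mp ((mem_closedBall.mp hz).trans hnonpos)]
    exact hconv.midpoint_mem h₁ h₂

lemma infDist_le_of_forall_inner_le_suppF_add (hM : IsCompact M) (hconv : Convex ℝ M)
    (hne : M.Nonempty) {x : EuclideanSpace ℝ (Fin n)} {c : ℝ} (hc : 0 ≤ c)
    (h : ∀ p : EuclideanSpace ℝ (Fin n), ‖p‖ = 1 → ⟪p, x⟫_ℝ ≤ suppF p M + c) :
    infDist x M ≤ c := by
  obtain ⟨m, hm, hdist⟩ := hM.exists_infDist_eq_dist hne x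
  rcases eq_or_ne x m with rfl | hxm
  · rwa [hdist, dist_self]
  have hobtuse : ∀ w ∈ M, ⟪x - m, w - m⟫_ℝ ≤ 0 := by
    refine (norm_eq_iInf_iff_real_inner_le_zero hconv hm).mp ?_
    rw [← dist_eq_norm, ← hdist, infDist_eq_iInf]
    simp only [dist_eq_norm]
  set u := ‖x - m‖⁻¹ • (x - m)
  have hu : ‖u‖ = 1 := norm_smul_inv_norm (sub_ne_zero.mpr hxm)
  have hmax : IsMaxOn (fun z => ⟪u, z⟫_ℝ) M m := fun w hw => by
    have := mul_nonpos_of_nonneg_of_nonpos (inv_nonneg.mpr (norm_nonneg (x - m))) (hobtuse w hw)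
    rw [← real_inner_smul_left, inner_sub_right] at this
    exact sub_nonpos.mp this
  have hux : ⟪u, x - m⟫_ℝ = ‖x - m‖ := by
    rw [real_inner_smul_left, real_inner_self_eq_norm_sq, sq,
      inv_mul_cancel_left₀ (norm_ne_zero_iff.mpr (sub_ne_zero.mpr hxm))]
  rw [hdist, dist_eq_norm, ← hux, inner_sub_right]
  linarith [h u hu, suppF_eq_of_isMaxOn hm hmax]

lemma inner_le_suppF_add_of_mem_polyApprox_s15 (hM : IsCompact M) (hconv : Convex ℝ M)
    (hne : M.Nonempty) {ε r Δ : ℝ} (hε : 0 < ε) (hΔ₀ : 0 ≤ Δ) (hΔ : Δ ≤ 1 / 2)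
    (hεr : ε * Δ < 4 * r)
    (hball : ∀ y₁ ∈ M, ∀ y₂ ∈ M, ‖y₁ - y₂‖ = ε → closedBall (midpoint ℝ y₁ y₂) r ⊆ M)
    {C : Finset (EuclideanSpace ℝ (Fin n))} (hC : IsGrid C Δ) {x : EuclideanSpace ℝ (Fin n)}
    (hx : x ∈ polyApprox C M) {p : EuclideanSpace ℝ (Fin n)} (hp : ‖p‖ = 1) :
    ⟪p, x⟫_ℝ ≤ suppF p M + 8 / 7 * ε * Δ := by
  by_cases hpC : p ∈ C
  · exact (hx p hpC).trans (le_add_of_nonneg_right (by positivity))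
  have hp0 : p ≠ 0 := ne_zero_of_norm_ne_zero (by rw [hp]; exact one_ne_zero)
  obtain ⟨k, q, α, hqC, hα, hsum, hclose⟩ := hC.2 p hp0 (by rwa [hp, inv_one, one_smul])
  have hq : ∀ i, ‖q i‖ = 1 := fun i => hC.1 _ (hqC i)
  obtain ⟨i₀⟩ : Nonempty (Fin k) := not_isEmpty_iff.mp fun _ => hp0 (by simp [hsum])
  choose X hXM hXmax using fun i => exists_isMaxOn_inner hM hne (q i)
  have hXclose : ∀ i, ‖X i - X i₀‖ ≤ ε := fun i =>
    norm_sub_le_of_isMaxOn hconv hball (hq i) (hq i₀) (hXM i) (hXM i₀) (hXmax i) (hXmax i₀) hε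
      (lt_of_le_of_lt (by gcongr; exact (hclose i i₀).le) hεr)
  have hαsum : ∑ i, α i ≤ 8 / 7 := by
    have := mul_sum_le_norm_of_eq_sum_smul hq (fun i => (hα i).le) hsum fun i j => (hclose i j).le
    have h78 : 7 / 8 ≤ 1 - Δ ^ 2 / 2 := by nlinarith
    have hαnn : 0 ≤ ∑ i, α i := Finset.sum_nonneg fun i _ => (hα i).le
    rw [hp] at this
    nlinarith [mul_le_mul_of_nonneg_right h78 hαnn]
  calc ⟪p, x⟫_ℝ ≤ ⟪p, X i₀⟫_ℝ + Δ * ε * ∑ i, α i :=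
        inner_le_inner_add_of_eq_sum_smul i₀ (fun i => (hα i).le) hsum
          (fun i => (hx _ (hqC i)).trans (suppF_eq_of_isMaxOn (hXM i) (hXmax i)).le) hXM
          (hXmax i₀) (fun i => (hclose i i₀).le) hXclose
    _ ≤ suppF p M + 8 / 7 * ε * Δ := by
        nlinarith [le_suppF_s15 hM (p := p) (hXM i₀), mul_nonneg hΔ₀ hε.le]

end EuclideanSpace

lemma hausdorffDist_le_of_subset_of_infDist_le {X : Type*} [PseudoMetricSpace X]
    {M S T : Set X} (hne : M.Nonempty) (hMS : M ⊆ S) (hST : S ⊆ T) {c : ℝ} (hc : 0 ≤ c)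
    (h : ∀ x ∈ T, infDist x M ≤ c) : hausdorffDist S T ≤ c :=
  hausdorffDist_le_of_infDist hc (fun x hx => by rw [infDist_zero_of_mem (hST hx)]; exact hc)
    fun x hx => (infDist_le_infDist_of_subset hMS hne).trans (h x hx)

theorem hausdorffDist_add_polyApprox_general
    (n : ℕ) (A B : Set (EuclideanSpace ℝ (Fin n)))
    (hA : IsCompact A) (hAc : Convex ℝ A)
    (hB : IsCompact B) (hBc : Convex ℝ B)
    (Δ εΔ : ℝ) (hΔ : Δ ∈ Set.Ioo (0 : ℝ) (1/2))
    (hεΔ : εΔ ∈ Set.Ioo 0 (Metric.diam (A + B)))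
    (heq : modConv (A + B) εΔ / εΔ = Δ / (4 - Δ^2))
    (C : Finset (EuclideanSpace ℝ (Fin n))) (hC : IsGrid C Δ) :
    Metric.hausdorffDist (polyApprox C A + polyApprox C B) (polyApprox C (A + B)) ≤
      8/7 * εΔ * Δ := by
  obtain ⟨hΔ₀, hΔ⟩ := hΔ
  obtain ⟨hε, hεdiam⟩ := hεΔ
  have hM : IsCompact (A + B) := hA.add hB
  have hconv : Convex ℝ (A + B) := hAc.add hBc
  have hne : (A + B).Nonempty := nonempty_iff_ne_empty.mpr fun h => by
    rw [h, diam_empty] at hεdiam; linarith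
  obtain ⟨hAne, hBne⟩ := add_nonempty.mp hne
  have hεr : εΔ * Δ < 4 * modConv (A + B) εΔ := by
    have h4 : 0 < 4 - Δ ^ 2 := by nlinarith
    rw [div_eq_div_iff hε.ne' h4.ne'] at heq
    have hr : 0 < modConv (A + B) εΔ := by nlinarith [mul_pos hΔ₀ hε]
    nlinarith [mul_pos hr (mul_pos hΔ₀ hΔ₀)]
  refine hausdorffDist_le_of_subset_of_infDist_le hne
    (add_subset_add (subset_polyApprox_s15 hA C) (subset_polyApprox_s15 hB C))
    (add_polyApprox_subset hA hB hAne hBne C) (by positivity) fun x hx => ?_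
  exact infDist_le_of_forall_inner_le_suppF_add hM hconv hne (by positivity) fun p hp =>
    inner_le_suppF_add_of_mem_polyApprox_s15 hM hconv hne hε hΔ₀.le hΔ.le hεr
      (fun _ h₁ _ h₂ hd => closedBall_modConv_subset hM.isClosed hconv h₁ h₂ hd) hC hx hp

/-- distance between the sum of the approximations and the approximation
of the sum. -/
theorem hausdorffDist_add_polyApprox
    (n : ℕ) (A B : Set (EuclideanSpace ℝ (Fin n)))
    (hA : IsCompact A) (hAc : Convex ℝ A)
    (hB : IsCompact B) (hBc : Convex ℝ B)
    (huc : UnifConvex (A + B))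
    (Δ εΔ : ℝ) (hΔ : Δ ∈ Set.Ioo (0 : ℝ) (1/2))
    (hεΔ : εΔ ∈ Set.Ioo 0 (Metric.diam (A + B)))
    (heq : modConv (A + B) εΔ / εΔ = Δ / (4 - Δ^2))
    (C : Finset (EuclideanSpace ℝ (Fin n))) (hC : IsGrid C Δ) :
    Metric.hausdorffDist (polyApprox C A + polyApprox C B) (polyApprox C (A + B)) ≤
      8/7 * εΔ * Δ :=
  hausdorffDist_add_polyApprox_general n A B hA hAc hB hBc Δ εΔ hΔ hεΔ heq C hC
end
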